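/- Let n ≥ 2, let F : ℝⁿ → ℝ be continuously differentiable on ℝⁿ \ {0}, and let Q be an n×n orthogonal matrix with F(Q·v) = F(v) for all v ∈ ℝⁿ. Let H be the set of torsion-type tensors T = (T^c_{ab}) (antisymmetric in a, b) such that for every nonzero v ∈ ℝⁿ and every i ∈ {1,…,n}: ½·Σ_{j,r} vʲ·( T^i_{jr} + T^j_{ir} − T^r_{ij} )·∂F/∂yʳ(v) = 0. Define the action of Q on torsion-type tensors by (Q·T)^c_{ab} = Σ_{i,j,r} Qⁱₐ·Qʲ_b·(Q⁻¹)ᶜᵣ·T^r_{ij}. Then H is invariant under this action: if T ∈ H then Q·T ∈ H. -/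

import Mathlib

open Finset

/-- The `r`-th partial derivative of `F` at `v`. -/
noncomputable def pd {n : ℕ} (F : (Fin n → ℝ) → ℝ) (v : Fin n → ℝ) (r : Fin n) : ℝ :=
  fderiv ℝ F v (Pi.single r 1)

/-- `H` : the set of torsion-type tensors `T` (we write `T a b c` for `T^c_{ab}`,
antisymmetric in `a, b`) satisfying the homogeneous compatibility system
`½·Σ_{j,r} vʲ·(T^i_{jr} + T^j_{ir} − T^r_{ij})·∂F/∂yʳ(v) = 0` for all `v ≠ 0` and all `i`. -/
noncomputable def compatKernel {n : ℕ} (F : (Fin n → ℝ) → ℝ) :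
    Set (Fin n → Fin n → Fin n → ℝ) :=
  {T | (∀ a b c, T a b c = - T b a c) ∧
    ∀ v : Fin n → ℝ, v ≠ 0 → ∀ i,
      (1 / 2) * ∑ j, ∑ r, v j * (T j r i + T i r j - T i j r) * pd F v r = 0}

/-- The action `(Q·T)^c_{ab} = Σ_{i,j,r} Qⁱₐ·Qʲ_b·(Q⁻¹)ᶜᵣ·T^r_{ij}` of a matrix on
torsion-type tensors, corresponding to `(φT)(v,w) = φ⁻¹ T(φv, φw)`. -/
noncomputable def matAction {n : ℕ} (Q : Matrix (Fin n) (Fin n) ℝ)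
    (T : Fin n → Fin n → Fin n → ℝ) : Fin n → Fin n → Fin n → ℝ :=
  fun a b c => ∑ i, ∑ j, ∑ r, Q i a * Q j b * Q⁻¹ c r * T i j r

/-!
Write `⟨T(x, y), z⟩` for the trilinear form of a torsion-type tensor. Contracted with `xⁱ`, the
compatibility system at `v` reads `⟨T(v, p), x⟩ + ⟨T(x, p), v⟩ - ⟨T(x, v), p⟩ = 0` for all `x`,
with `p = ∇F(v)`. For orthogonal `Q` the action becomes `⟨(Q·T)(x, y), z⟩ = ⟨T(Qx, Qy), Qz⟩`, and
the invariance of `F` gives `∇F(v) = Qᵀ ∇F(Qv)`. Hence the system for `Q·T` at `v`, tested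
against `x`, is the system for `T` at `Qv ≠ 0`, tested against `Qx`.
-/

open Matrix

theorem Fintype.sum₃_comm_sum₃ {α β γ δ ε ζ M : Type*} [Fintype α] [Fintype β]
    [Fintype γ] [Fintype δ] [Fintype ε] [Fintype ζ] [AddCommMonoid M]
    (f : α → β → γ → δ → ε → ζ → M) :
    ∑ a, ∑ b, ∑ c, ∑ i, ∑ j, ∑ r, f a b c i j r = ∑ i, ∑ j, ∑ r, ∑ a, ∑ b, ∑ c, f a b c i j r :=
  calc _ = ∑ p : α × β × γ, ∑ q : δ × ε × ζ, f p.1 p.2.1 p.2.2 q.1 q.2.1 q.2.2 := by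
          simp only [Fintype.sum_prod_type]
    _ = ∑ q : δ × ε × ζ, ∑ p : α × β × γ, f p.1 p.2.1 p.2.2 q.1 q.2.1 q.2.2 := Finset.sum_comm
    _ = _ := by simp only [Fintype.sum_prod_type]

theorem Finset.sum_mul_sum_mul_sum {ι κ μ R : Type*} [NonUnitalNonAssocSemiring R]
    (s : Finset ι) (t : Finset κ) (u : Finset μ) (f : ι → R) (g : κ → R) (h : μ → R) :
    (∑ a ∈ s, f a) * (∑ b ∈ t, g b) * (∑ c ∈ u, h c) =
      ∑ a ∈ s, ∑ b ∈ t, ∑ c ∈ u, f a * g b * h c := by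
  rw [Finset.sum_mul_sum, Finset.sum_mul]
  simp_rw [Finset.sum_mul_sum]

theorem fderiv_apply_eq_dotProduct_pd {n : ℕ} (F : (Fin n → ℝ) → ℝ) (w u : Fin n → ℝ) :
    fderiv ℝ F w u = u ⬝ᵥ pd F w := by
  conv_lhs => rw [pi_eq_sum_univ' u]
  simp [pd, dotProduct]

theorem pd_eq_vecMul_of_mulVec_invariant {n : ℕ} {F : (Fin n → ℝ) → ℝ}
    {Q : Matrix (Fin n) (Fin n) ℝ} (hinv : ∀ v, F (Q *ᵥ v) = F v) {v : Fin n → ℝ} (hF : DifferentiableAt ℝ F (Q *ᵥ v)) :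
    pd F v = pd F (Q *ᵥ v) ᵥ* Q := by
  let L : (Fin n → ℝ) →L[ℝ] (Fin n → ℝ) := LinearMap.toContinuousLinearMap (toLin' Q)
  have hL : F ∘ L = F := funext fun x => hinv x
  have hfd : fderiv ℝ F v = (fderiv ℝ F (Q *ᵥ v)).comp L := by
    conv_lhs => rw [← hL]
    rw [fderiv_comp (f := L) v hF L.differentiableAt, L.fderiv]
    rfl
  funext r
  rw [pd, hfd, ContinuousLinearMap.comp_apply, fderiv_apply_eq_dotProduct_pd]
  change (Q *ᵥ Pi.single r 1) ⬝ᵥ _ = _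
  rw [mulVec_single_one, dotProduct_comm]
  rfl

section TorsionTensor

variable {n : ℕ}

/-- `⟨T(x, y), z⟩` for the bilinear map `T(x, y)ᶜ = Σ xᵃ yᵇ T^c_{ab}`. -/
noncomputable def torsionPairing (T : Fin n → Fin n → Fin n → ℝ) (x y z : Fin n → ℝ) : ℝ :=
  ∑ a, ∑ b, ∑ c, x a * y b * z c * T a b c

theorem torsionPairing_matAction (Q : Matrix (Fin n) (Fin n) ℝ) (T : Fin n → Fin n → Fin n → ℝ)
    (x y z : Fin n → ℝ) :
    torsionPairing (matAction Q T) x y z = torsionPairing T (Q *ᵥ x) (Q *ᵥ y) (z ᵥ* Q⁻¹) := by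
  simp only [torsionPairing, matAction, mulVec, vecMul, dotProduct]
  simp only [Finset.sum_mul_sum_mul_sum]
  simp only [Finset.sum_mul, Finset.mul_sum]
  rw [Fintype.sum₃_comm_sum₃]
  exact Fintype.sum_congr _ _ fun i => Fintype.sum_congr _ _ fun j =>
    Fintype.sum_congr _ _ fun r => Fintype.sum_congr _ _ fun a =>
      Fintype.sum_congr _ _ fun b => Fintype.sum_congr _ _ fun c => by ring

theorem torsionPairing_matAction_of_mem_orthogonalGroup {Q : Matrix (Fin n) (Fin n) ℝ}
    (hQ : Q ∈ orthogonalGroup (Fin n) ℝ) (T : Fin n → Fin n → Fin n → ℝ) (x y z : Fin n → ℝ) :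
    torsionPairing (matAction Q T) x y z = torsionPairing T (Q *ᵥ x) (Q *ᵥ y) (Q *ᵥ z) := by
  rw [torsionPairing_matAction, inv_eq_right_inv ((mem_orthogonalGroup_iff _ _).1 hQ),
    vecMul_transpose]

noncomputable def compatForm (T : Fin n → Fin n → Fin n → ℝ) (v p x : Fin n → ℝ) : ℝ :=
  torsionPairing T v p x + torsionPairing T x p v - torsionPairing T x v p

theorem sum_mul_compat_eq_compatForm (T : Fin n → Fin n → Fin n → ℝ) (v p x : Fin n → ℝ) :
    ∑ i, x i * ∑ j, ∑ r, v j * (T j r i + T i r j - T i j r) * p r = compatForm T v p x := by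
  have h₁ : torsionPairing T v p x = ∑ i, ∑ j, ∑ r, x i * (v j * T j r i * p r) := by
    rw [torsionPairing, Finset.sum_comm_cycle]
    exact Fintype.sum_congr _ _ fun i => Fintype.sum_congr _ _ fun j =>
      Fintype.sum_congr _ _ fun r => by ring
  have h₂ : torsionPairing T x p v = ∑ i, ∑ j, ∑ r, x i * (v j * T i r j * p r) := by
    refine Fintype.sum_congr _ _ fun i => ?_
    rw [Finset.sum_comm]
    exact Fintype.sum_congr _ _ fun j => Fintype.sum_congr _ _ fun r => by ring
  have h₃ : torsionPairing T x v p = ∑ i, ∑ j, ∑ r, x i * (v j * T i j r * p r) :=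
    Fintype.sum_congr _ _ fun i => Fintype.sum_congr _ _ fun j =>
      Fintype.sum_congr _ _ fun r => by ring
  rw [compatForm, h₁, h₂, h₃]
  simp only [Finset.mul_sum, ← Finset.sum_add_distrib, ← Finset.sum_sub_distrib]
  exact Fintype.sum_congr _ _ fun i => Fintype.sum_congr _ _ fun j =>
    Fintype.sum_congr _ _ fun r => by ring

theorem compatForm_matAction_of_mem_orthogonalGroup {Q : Matrix (Fin n) (Fin n) ℝ}
    (hQ : Q ∈ orthogonalGroup (Fin n) ℝ) (T : Fin n → Fin n → Fin n → ℝ) (v p x : Fin n → ℝ) :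
    compatForm (matAction Q T) v p x = compatForm T (Q *ᵥ v) (Q *ᵥ p) (Q *ᵥ x) := by
  simp only [compatForm, torsionPairing_matAction_of_mem_orthogonalGroup hQ]

theorem forall_compat_eq_zero_iff (T : Fin n → Fin n → Fin n → ℝ) (v p : Fin n → ℝ) :
    (∀ i, (1 / 2 : ℝ) * ∑ j, ∑ r, v j * (T j r i + T i r j - T i j r) * p r = 0) ↔
      ∀ x, compatForm T v p x = 0 := by
  simp only [mul_eq_zero, one_div, inv_eq_zero, OfNat.ofNat_ne_zero, false_or]
  refine ⟨fun h x => by simp [← sum_mul_compat_eq_compatForm, h], fun h i => ?_⟩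
  simpa [← sum_mul_compat_eq_compatForm, Pi.single_apply] using h (Pi.single i 1)

theorem mem_compatKernel_iff {F : (Fin n → ℝ) → ℝ} {T : Fin n → Fin n → Fin n → ℝ} :
    T ∈ compatKernel F ↔
      (∀ a b c, T a b c = -T b a c) ∧ ∀ v, v ≠ 0 → ∀ x, compatForm T v (pd F v) x = 0 := by
  simp only [compatKernel, Set.mem_ofPred_eq, forall_compat_eq_zero_iff]

theorem matAction_antisymm (Q : Matrix (Fin n) (Fin n) ℝ) {T : Fin n → Fin n → Fin n → ℝ}
    (hT : ∀ a b c, T a b c = -T b a c) (a b c : Fin n) :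
    matAction Q T a b c = -matAction Q T b a c := by
  rw [matAction, matAction, Finset.sum_comm, ← Finset.sum_neg_distrib]
  exact Fintype.sum_congr _ _ fun j => by
    simp only [← Finset.sum_neg_distrib]
    exact Fintype.sum_congr _ _ fun i => Fintype.sum_congr _ _ fun r => by rw [hT]; ring

end TorsionTensor

/-- If `Q` is an orthogonal matrix leaving `F` invariant, then the solution set `H` of the
homogeneous compatibility system is invariant under the action of `Q`. -/
theorem compatKernel_invariant {n : ℕ} (F : (Fin n → ℝ) → ℝ)
    (hdiff : ContDiffOn ℝ 1 F {(0 : Fin n → ℝ)}ᶜ)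
    (Q : Matrix (Fin n) (Fin n) ℝ) (hQ : Q ∈ Matrix.orthogonalGroup (Fin n) ℝ)
    (hinv : ∀ v : Fin n → ℝ, F (Q.mulVec v) = F v)
    (T : Fin n → Fin n → Fin n → ℝ) (hT : T ∈ compatKernel F) :
    matAction Q T ∈ compatKernel F := by
  have hQQt : Q * Qᵀ = 1 := (mem_orthogonalGroup_iff _ _).1 hQ
  have hQtQ : Qᵀ * Q = 1 := (mem_orthogonalGroup_iff' _ _).1 hQ
  rw [mem_compatKernel_iff] at hT ⊢
  refine ⟨matAction_antisymm Q hT.1, fun v hv x => ?_⟩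
  have hQv : Q *ᵥ v ≠ 0 := fun h => hv <| by
    rw [← one_mulVec v, ← hQtQ, ← mulVec_mulVec, h, mulVec_zero]
  have hF : DifferentiableAt ℝ F (Q *ᵥ v) :=
    (hdiff.differentiableOn one_ne_zero).differentiableAt (isOpen_compl_singleton.mem_nhds hQv)
  rw [pd_eq_vecMul_of_mulVec_invariant hinv hF, compatForm_matAction_of_mem_orthogonalGroup hQ,
    ← mulVec_transpose, mulVec_mulVec, hQQt, one_mulVec]
  exact hT.2 _ hQv _
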